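/- arXiv:2510.26562 — 4 statements merged into one kernel-verified Lean document; each statement's English description precedes it below -/
import Mathlib

section
/- Suppose for all (a,b,c,d,x,y) the forward and time-reversed joint distributions satisfy p→(c,a,d,b|x,y) = p←(d,b,c,a|y,x), where p→(c,a,d,b|x,y) = p(c) · p(d|x,c) · p(a|c,x,d) · p(b|c,x,a,d,y) and p←(d,b,c,a|y,x) = q(d) · q(c|y,d) · q(b|d,y,c) · q(a|d,y,b,c,x) for conditional probability kernels p and q. Then the marginal distribution of (c,d) is independent of both settings: Σ_{a,b} p→(c,a,d,b|x,y) depends on neither x nor y, i.e. p(c,d|x,y) = p(c,d). -/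
/-- Lemma 1 (Causal Friendliness): ATS + the NRC causal factorisations imply
    that the pseudo-event marginal p(c,d|x,y) is independent of both settings. -/
theorem stmt_3
    -- forward-time conditional probability kernels
    (pC : Bool → ℝ) (pD : Bool → Bool → Bool → ℝ)      -- p(c), p(d|x,c)
    (pA : Bool → Bool → Bool → Bool → ℝ)               -- p(a|c,x,d)
    (pB : Bool → Bool → Bool → Bool → Bool → Bool → ℝ) -- p(b|c,x,a,d,y)
    -- time-reversed conditional probability kernels
    (qD : Bool → ℝ) (qC : Bool → Bool → Bool → ℝ)      -- q(d), q(c|y,d)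
    (qB : Bool → Bool → Bool → Bool → ℝ)               -- q(b|d,y,c)
    (qA : Bool → Bool → Bool → Bool → Bool → Bool → ℝ) -- q(a|d,y,b,c,x)
    -- nonnegativity
    (hpC0 : ∀ c, 0 ≤ pC c) (hpD0 : ∀ x c d, 0 ≤ pD x c d)
    (hpA0 : ∀ c x d a, 0 ≤ pA c x d a) (hpB0 : ∀ c x a d y b, 0 ≤ pB c x a d y b)
    (hqD0 : ∀ d, 0 ≤ qD d) (hqC0 : ∀ y d c, 0 ≤ qC y d c)
    (hqB0 : ∀ d y c b, 0 ≤ qB d y c b) (hqA0 : ∀ d y b c x a, 0 ≤ qA d y b c x a)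
    -- normalisation of each kernel over its output variable
    (hpC1 : ∑ c, pC c = 1) (hpD1 : ∀ x c, ∑ d, pD x c d = 1)
    (hpA1 : ∀ c x d, ∑ a, pA c x d a = 1) (hpB1 : ∀ c x a d y, ∑ b, pB c x a d y b = 1)
    (hqD1 : ∑ d, qD d = 1) (hqC1 : ∀ y d, ∑ c, qC y d c = 1)
    (hqB1 : ∀ d y c, ∑ b, qB d y c b = 1) (hqA1 : ∀ d y b c x, ∑ a, qA d y b c x a = 1)
    -- Axiological Time Symmetry: p→(c,a,d,b|x,y) = p←(d,b,c,a|y,x)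
    (hATS : ∀ c a d b x y,
      pC c * pD x c d * pA c x d a * pB c x a d y b =
      qD d * qC y d c * qB d y c b * qA d y b c x a) :
    -- conclusion: the (c,d)-marginal of the forward distribution is setting-independent
    ∀ c d x y x' y',
      (∑ a, ∑ b, pC c * pD x c d * pA c x d a * pB c x a d y b) =
      (∑ a, ∑ b, pC c * pD x' c d * pA c x' d a * pB c x' a d y' b) := by
  have hF : ∀ c d x y, (∑ a, ∑ b, pC c * pD x c d * pA c x d a * pB c x a d y b)
      = pC c * pD x c d := by
    intro c d x y
    have : ∀ a, (∑ b, pC c * pD x c d * pA c x d a * pB c x a d y b)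
        = pC c * pD x c d * pA c x d a := by
      intro a
      rw [← Finset.mul_sum, hpB1, mul_one]
    simp only [this]
    rw [← Finset.mul_sum, hpA1, mul_one]
  have hR : ∀ c d x y, (∑ a, ∑ b, qD d * qC y d c * qB d y c b * qA d y b c x a)
      = qD d * qC y d c := by
    intro c d x y
    rw [Finset.sum_comm]
    have : ∀ b, (∑ a, qD d * qC y d c * qB d y c b * qA d y b c x a)
        = qD d * qC y d c * qB d y c b := by
      intro b
      rw [← Finset.mul_sum, hqA1, mul_one]
    simp only [this]
    rw [← Finset.mul_sum, hqB1, mul_one]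
  have key : ∀ c d x y, pC c * pD x c d = qD d * qC y d c := by
    intro c d x y
    rw [← hF c d x y]
    simp only [hATS]
    exact hR c d x y
  intro c d x y x' y'
  rw [hF, hF, key c d x y, key c d x' y]
end

section
/- Let p(c,d|x,y) be conditional kernels over Booleans c,d given settings x,y ∈ {0,1}, and p(a|x,c), p(b|y,c,d) response kernels with outcomes a,b ∈ {±1}. Define p(a,b|x,y) = Σ_{c,d} p(c,d|x,y) p(a|x,c) p(b|y,c,d) and correlators ⟨A_x B_y⟩ = Σ_{a,b} a·b·p(a,b|x,y). There exists a choice of setting-dependent distributions p(c,d|x,y) and deterministic responses such that ⟨A₀B₀⟩ + ⟨A₀B₁⟩ + ⟨A₁B₀⟩ - ⟨A₁B₁⟩ = 4. -/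
/-- Dropping Absoluteness of Pseudo Events: a setting-dependent pseudo-event
    distribution together with deterministic ±1 responses reaches the algebraic
    maximum S = 4 of the CHSH expression. -/
theorem stmt_5 :
    ∃ (pcd : Bool → Bool → Fin 2 → Fin 2 → ℝ)   -- p(c,d|x,y)
      (A : Fin 2 → Bool → ℝ)                    -- deterministic response a = A(x,c)
      (B : Fin 2 → Bool → Bool → ℝ),            -- deterministic response b = B(y,c,d)
      (∀ c d x y, 0 ≤ pcd c d x y) ∧
      (∀ x y, ∑ c, ∑ d, pcd c d x y = 1) ∧
      (∀ x c, A x c = 1 ∨ A x c = -1) ∧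
      (∀ y c d, B y c d = 1 ∨ B y c d = -1) ∧
      (let corr : Fin 2 → Fin 2 → ℝ :=
        fun x y => ∑ c, ∑ d, pcd c d x y * A x c * B y c d
      corr 0 0 + corr 0 1 + corr 1 0 - corr 1 1 = 4) := by
  refine ⟨fun c d x y => if c = decide (x = 1) ∧ d = decide (y = 1) then 1 else 0,
    fun _ _ => 1, fun _ c d => if c && d then -1 else 1, ?_, ?_, ?_, ?_, ?_⟩
  · intro c d x y; dsimp only; split <;> norm_num
  · intro x y; fin_cases x <;> fin_cases y <;> simp [Finset.sum_boole] <;> decide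
  · intro _ _; left; rfl
  · intro _ c d; cases c <;> cases d <;> simp
  · simp [Fin.sum_univ_succ]
    norm_num
end

section
/- Let A₀, A₁, B₀, B₁ be Hermitian operators on finite-dimensional Hilbert spaces H_A and H_B respectively, each with operator norm at most 1. Then the operator norm of S = A₀⊗B₀ + A₀⊗B₁ + A₁⊗B₀ − A₁⊗B₁ is at most 2√2. -/
open Matrix
open scoped Kronecker

noncomputable section TsirelsonAux

local notation "⟪" x ", " y "⟫" => @inner ℂ _ _ x y

private lemma sa_norm_le' {E : Type*} [NormedAddCommGroup E] [InnerProductSpace ℂ E]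
    [CompleteSpace E]
    (T : E →L[ℂ] E) (hT : IsSelfAdjoint T) {c : ℝ} (hc : 0 ≤ c)
    (h : ∀ x : E, ‖x‖ ≤ 1 → |(⟪T x, x⟫).re| ≤ c) : ‖T‖ ≤ c := by
  have hsymm := ContinuousLinearMap.isSelfAdjoint_iff_isSymmetric.mp hT
  have h' : ∀ z : E, |(⟪T z, z⟫).re| ≤ c * ‖z‖ ^ 2 := by
    intro z
    rcases eq_or_ne z 0 with rfl | hz
    · simp
    · have hz' : ‖z‖ ≠ 0 := norm_ne_zero_iff.mpr hz
      set a : ℝ := ‖z‖⁻¹ with ha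
      have hu : ‖(a : ℂ) • z‖ ≤ 1 := by
        simp [norm_smul, ha, inv_mul_cancel₀ hz', Complex.norm_real]
      have := h ((a : ℂ) • z) hu
      rw [_root_.map_smul, inner_smul_left, inner_smul_right] at this
      simp only [Complex.conj_ofReal] at this
      rw [← mul_assoc, ← Complex.ofReal_mul] at this
      rw [Complex.re_ofReal_mul, abs_mul, abs_of_nonneg (by positivity : (0:ℝ) ≤ a * a)] at this
      have h2 : a * a * |(⟪T z, z⟫).re| ≤ c := this
      have h3 : a * a = (‖z‖ ^ 2)⁻¹ := by rw [ha]; field_simp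
      rw [h3] at h2
      have h4 : (0:ℝ) < ‖z‖ ^ 2 := by positivity
      calc |(⟪T z, z⟫).re| = (‖z‖ ^ 2)⁻¹ * |(⟪T z, z⟫).re| * ‖z‖ ^ 2 := by
            field_simp
        _ ≤ c * ‖z‖ ^ 2 := by nlinarith
  have key : ∀ x y : E, ‖x‖ ≤ 1 → ‖y‖ ≤ 1 → (⟪T x, y⟫).re ≤ c := by
    intro x y hx hy
    have expand : (⟪T (x + y), x + y⟫).re - (⟪T (x - y), x - y⟫).re
        = 4 * (⟪T x, y⟫).re := by
      have hyx : (⟪T y, x⟫).re = (⟪T x, y⟫).re := by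
        rw [hsymm.apply_clm y x]
        exact inner_re_symm (𝕜 := ℂ) _ _
      simp only [map_add, map_sub, inner_add_left, inner_add_right, inner_sub_left,
        inner_sub_right, Complex.add_re, Complex.sub_re]
      linarith
    have p := h' (x + y)
    have q := h' (x - y)
    have par := parallelogram_law_with_norm ℂ x y
    have hx2 : ‖x‖ * ‖x‖ ≤ 1 := by nlinarith [norm_nonneg x]
    have hy2 : ‖y‖ * ‖y‖ ≤ 1 := by nlinarith [norm_nonneg y]
    have p' : (⟪T (x+y), x+y⟫).re ≤ c * (‖x+y‖ * ‖x+y‖) := by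
      have := (abs_le.mp p).2; nlinarith [this]
    have q' : -(c * (‖x-y‖ * ‖x-y‖)) ≤ (⟪T (x-y), x-y⟫).re := by
      have := (abs_le.mp q).1; nlinarith [this]
    nlinarith [expand, par, mul_nonneg hc (mul_self_nonneg ‖x+y‖)]
  refine ContinuousLinearMap.opNorm_le_bound T hc ?_
  intro x
  rcases eq_or_ne x 0 with rfl | hx0
  · simp
  have hxn : (0:ℝ) < ‖x‖ := norm_pos_iff.mpr hx0
  suffices hsuf : ∀ u : E, ‖u‖ ≤ 1 → ‖T u‖ ≤ c by
    have := hsuf ((‖x‖⁻¹ : ℂ) • x) (by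
      simp [norm_smul, inv_mul_cancel₀ hxn.ne'])
    rw [_root_.map_smul, norm_smul] at this
    simp only [norm_inv, Complex.norm_real, Complex.norm_ofNat, norm_norm] at this
    calc ‖T x‖ = ‖x‖ * (‖(‖x‖:ℂ)‖⁻¹ * ‖T x‖) := by
          rw [Complex.norm_real, Real.norm_eq_abs, abs_of_pos hxn]; field_simp
      _ ≤ ‖x‖ * c := by
          refine mul_le_mul_of_nonneg_left ?_ hxn.le
          simpa using this
      _ = c * ‖x‖ := mul_comm _ _
  intro u hu
  rcases eq_or_ne (T u) 0 with h0 | h0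
  · rw [h0]; simpa using hc
  have hTu : (0:ℝ) < ‖T u‖ := norm_pos_iff.mpr h0
  have hy : ‖(‖T u‖⁻¹ : ℂ) • T u‖ ≤ 1 := by
    simp [norm_smul, inv_mul_cancel₀ hTu.ne']
  have := key u ((‖T u‖⁻¹ : ℂ) • T u) hu hy
  rw [inner_smul_right] at this
  have hinner : ⟪T u, T u⟫ = (‖T u‖ : ℂ) ^ 2 := inner_self_eq_norm_sq_to_K (T u)
  rw [hinner] at this
  have : (((‖T u‖⁻¹ : ℂ)) * (‖T u‖ : ℂ) ^ 2).re ≤ c := this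
  rw [show ((‖T u‖⁻¹ : ℂ)) * (‖T u‖ : ℂ) ^ 2 = ((‖T u‖ : ℝ) : ℂ) by
    have hne : (‖T u‖ : ℂ) ≠ 0 := Complex.ofReal_ne_zero.mpr hTu.ne'
    rw [sq, ← mul_assoc, inv_mul_cancel₀ hne, one_mul]] at this
  simpa using this

private lemma euclid_norm_sq' {ι : Type*} [Fintype ι] (x : EuclideanSpace ℂ ι) :
    ‖x‖ ^ 2 = ∑ i, ‖x i‖ ^ 2 := by
  rw [EuclideanSpace.norm_eq, Real.sq_sqrt (by positivity)]

private lemma clm_norm_sq_le' {ι : Type*} [Fintype ι] [DecidableEq ι] (M : Matrix ι ι ℂ)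
    (x : EuclideanSpace ℂ ι) :
    ‖Matrix.toEuclideanCLM (𝕜 := ℂ) M x‖ ^ 2
      ≤ ‖Matrix.toEuclideanCLM (𝕜 := ℂ) M‖ ^ 2 * ‖x‖ ^ 2 := by
  have h := (Matrix.toEuclideanCLM (𝕜 := ℂ) M).le_opNorm x
  have h0 : (0:ℝ) ≤ ‖Matrix.toEuclideanCLM (𝕜 := ℂ) M‖ * ‖x‖ := by positivity
  nlinarith [norm_nonneg (Matrix.toEuclideanCLM (𝕜 := ℂ) M x)]

private lemma kron_one_mulVec' {m n : ℕ} (A : Matrix (Fin m) (Fin m) ℂ)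
    (v : Fin m × Fin n → ℂ) (i : Fin m) (j : Fin n) :
    ((A ⊗ₖ (1 : Matrix (Fin n) (Fin n) ℂ)) *ᵥ v) (i, j)
      = (A *ᵥ (fun k => v (k, j))) i := by
  simp [mulVec, dotProduct, Fintype.sum_prod_type, kroneckerMap_apply, Matrix.one_apply,
    mul_ite, mul_one, mul_zero, ite_mul, zero_mul, Finset.sum_ite_eq, Finset.sum_ite_eq']

private lemma one_kron_mulVec' {m n : ℕ} (B : Matrix (Fin n) (Fin n) ℂ)
    (v : Fin m × Fin n → ℂ) (i : Fin m) (j : Fin n) :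
    (((1 : Matrix (Fin m) (Fin m) ℂ) ⊗ₖ B) *ᵥ v) (i, j)
      = (B *ᵥ (fun l => v (i, l))) j := by
  simp [mulVec, dotProduct, Fintype.sum_prod_type, kroneckerMap_apply, Matrix.one_apply,
    mul_ite, mul_one, mul_zero, ite_mul, zero_mul, Finset.sum_ite_eq, Finset.sum_ite_eq']

private lemma norm_kron_one_apply_le' {m n : ℕ} (A : Matrix (Fin m) (Fin m) ℂ)
    (v : EuclideanSpace ℂ (Fin m × Fin n)) :
    ‖Matrix.toEuclideanCLM (𝕜 := ℂ) (A ⊗ₖ (1 : Matrix (Fin n) (Fin n) ℂ)) v‖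
      ≤ ‖Matrix.toEuclideanCLM (𝕜 := ℂ) A‖ * ‖v‖ := by
  have hsq : ‖Matrix.toEuclideanCLM (𝕜 := ℂ) (A ⊗ₖ (1 : Matrix (Fin n) (Fin n) ℂ)) v‖ ^ 2
      ≤ (‖Matrix.toEuclideanCLM (𝕜 := ℂ) A‖ * ‖v‖) ^ 2 := by
    rw [euclid_norm_sq']
    have step : ∀ p : Fin m × Fin n,
        ‖(Matrix.toEuclideanCLM (𝕜 := ℂ) (A ⊗ₖ (1 : Matrix (Fin n) (Fin n) ℂ)) v) p‖ ^ 2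
        = ‖((A ⊗ₖ (1 : Matrix (Fin n) (Fin n) ℂ)) *ᵥ (v : Fin m × Fin n → ℂ)) p‖ ^ 2 :=
      fun _ => rfl
    simp only [step]
    calc ∑ p : Fin m × Fin n,
          ‖((A ⊗ₖ (1 : Matrix (Fin n) (Fin n) ℂ)) *ᵥ (v : Fin m × Fin n → ℂ)) p‖ ^ 2
        = ∑ j : Fin n, ∑ i : Fin m, ‖(A *ᵥ (fun k => v (k, j))) i‖ ^ 2 := by
          rw [Fintype.sum_prod_type, Finset.sum_comm]
          simp only [kron_one_mulVec']
      _ ≤ ∑ j : Fin n, ‖Matrix.toEuclideanCLM (𝕜 := ℂ) A‖ ^ 2 *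
            (∑ k : Fin m, ‖v (k, j)‖ ^ 2) := by
          refine Finset.sum_le_sum fun j _ => ?_
          have := clm_norm_sq_le' A ((WithLp.equiv 2 (Fin m → ℂ)).symm (fun k => v (k, j)))
          rw [euclid_norm_sq', euclid_norm_sq'] at this
          exact this
      _ = (‖Matrix.toEuclideanCLM (𝕜 := ℂ) A‖ * ‖v‖) ^ 2 := by
          rw [← Finset.mul_sum, mul_pow, euclid_norm_sq', Fintype.sum_prod_type, Finset.sum_comm]
  have h1 : (0:ℝ) ≤ ‖Matrix.toEuclideanCLM (𝕜 := ℂ) A‖ * ‖v‖ := by positivity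
  nlinarith [norm_nonneg (Matrix.toEuclideanCLM (𝕜 := ℂ) (A ⊗ₖ (1 : Matrix (Fin n) (Fin n) ℂ)) v)]

private lemma norm_one_kron_apply_le' {m n : ℕ} (B : Matrix (Fin n) (Fin n) ℂ)
    (v : EuclideanSpace ℂ (Fin m × Fin n)) :
    ‖Matrix.toEuclideanCLM (𝕜 := ℂ) ((1 : Matrix (Fin m) (Fin m) ℂ) ⊗ₖ B) v‖
      ≤ ‖Matrix.toEuclideanCLM (𝕜 := ℂ) B‖ * ‖v‖ := by
  have hsq : ‖Matrix.toEuclideanCLM (𝕜 := ℂ) ((1 : Matrix (Fin m) (Fin m) ℂ) ⊗ₖ B) v‖ ^ 2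
      ≤ (‖Matrix.toEuclideanCLM (𝕜 := ℂ) B‖ * ‖v‖) ^ 2 := by
    rw [euclid_norm_sq']
    have step : ∀ p : Fin m × Fin n,
        ‖(Matrix.toEuclideanCLM (𝕜 := ℂ) ((1 : Matrix (Fin m) (Fin m) ℂ) ⊗ₖ B) v) p‖ ^ 2
        = ‖(((1 : Matrix (Fin m) (Fin m) ℂ) ⊗ₖ B) *ᵥ (v : Fin m × Fin n → ℂ)) p‖ ^ 2 :=
      fun _ => rfl
    simp only [step]
    calc ∑ p : Fin m × Fin n,
          ‖(((1 : Matrix (Fin m) (Fin m) ℂ) ⊗ₖ B) *ᵥ (v : Fin m × Fin n → ℂ)) p‖ ^ 2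
        = ∑ i : Fin m, ∑ j : Fin n, ‖(B *ᵥ (fun l => v (i, l))) j‖ ^ 2 := by
          rw [Fintype.sum_prod_type]
          simp only [one_kron_mulVec']
      _ ≤ ∑ i : Fin m, ‖Matrix.toEuclideanCLM (𝕜 := ℂ) B‖ ^ 2 *
            (∑ l : Fin n, ‖v (i, l)‖ ^ 2) := by
          refine Finset.sum_le_sum fun i _ => ?_
          have := clm_norm_sq_le' B ((WithLp.equiv 2 (Fin n → ℂ)).symm (fun l => v (i, l)))
          rw [euclid_norm_sq', euclid_norm_sq'] at this
          exact this
      _ = (‖Matrix.toEuclideanCLM (𝕜 := ℂ) B‖ * ‖v‖) ^ 2 := by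
          rw [← Finset.mul_sum, mul_pow, euclid_norm_sq', Fintype.sum_prod_type]
  have h1 : (0:ℝ) ≤ ‖Matrix.toEuclideanCLM (𝕜 := ℂ) B‖ * ‖v‖ := by positivity
  nlinarith [norm_nonneg (Matrix.toEuclideanCLM (𝕜 := ℂ) ((1 : Matrix (Fin m) (Fin m) ℂ) ⊗ₖ B) v)]

private lemma kron_conjTranspose' {m n : ℕ} (A : Matrix (Fin m) (Fin m) ℂ)
    (B : Matrix (Fin n) (Fin n) ℂ) : (A ⊗ₖ B)ᴴ = Aᴴ ⊗ₖ Bᴴ := by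
  ext ⟨i, j⟩ ⟨k, l⟩
  simp [conjTranspose_apply, kroneckerMap_apply]

end TsirelsonAux

set_option maxHeartbeats 1000000 in
set_option synthInstance.maxHeartbeats 400000 in
/-- Tsirelson's bound: for Hermitian operators of norm at most 1, the operator norm
    of the CHSH operator A₀⊗B₀ + A₀⊗B₁ + A₁⊗B₀ − A₁⊗B₁ is at most 2√2. -/
theorem stmt_8 {m n : ℕ}
    (A₀ A₁ : Matrix (Fin m) (Fin m) ℂ) (B₀ B₁ : Matrix (Fin n) (Fin n) ℂ)
    (hA₀h : A₀.IsHermitian) (hA₁h : A₁.IsHermitian)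
    (hB₀h : B₀.IsHermitian) (hB₁h : B₁.IsHermitian)
    (hA₀ : ‖Matrix.toEuclideanCLM (𝕜 := ℂ) A₀‖ ≤ 1)
    (hA₁ : ‖Matrix.toEuclideanCLM (𝕜 := ℂ) A₁‖ ≤ 1)
    (hB₀ : ‖Matrix.toEuclideanCLM (𝕜 := ℂ) B₀‖ ≤ 1)
    (hB₁ : ‖Matrix.toEuclideanCLM (𝕜 := ℂ) B₁‖ ≤ 1) :
    ‖Matrix.toEuclideanCLM (𝕜 := ℂ) (A₀ ⊗ₖ B₀ + A₀ ⊗ₖ B₁ + A₁ ⊗ₖ B₀ - A₁ ⊗ₖ B₁)‖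
      ≤ 2 * Real.sqrt 2 := by
  set S : Matrix (Fin m × Fin n) (Fin m × Fin n) ℂ :=
    A₀ ⊗ₖ B₀ + A₀ ⊗ₖ B₁ + A₁ ⊗ₖ B₀ - A₁ ⊗ₖ B₁ with hS
  set M := Matrix.toEuclideanCLM (𝕜 := ℂ) (n := Fin m × Fin n)
  -- self-adjointness of the building blocks
  have hkerm : ∀ (A : Matrix (Fin m) (Fin m) ℂ) (B : Matrix (Fin n) (Fin n) ℂ),
      A.IsHermitian → B.IsHermitian → IsSelfAdjoint (M (A ⊗ₖ B)) := by
    intro A B hA hB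
    have : star (A ⊗ₖ B) = A ⊗ₖ B := by
      rw [Matrix.star_eq_conjTranspose, kron_conjTranspose', hA.eq, hB.eq]
    exact isSelfAdjoint_iff.mpr (by rw [← map_star, this])
  have h1m : (1 : Matrix (Fin m) (Fin m) ℂ).IsHermitian := Matrix.isHermitian_one
  have h1n : (1 : Matrix (Fin n) (Fin n) ℂ).IsHermitian := Matrix.isHermitian_one
  have hSsa : IsSelfAdjoint (M S) := by
    have hstar : star S = S := by
      rw [Matrix.star_eq_conjTranspose, hS]
      simp only [conjTranspose_add, conjTranspose_sub, kron_conjTranspose',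
        hA₀h.eq, hA₁h.eq, hB₀h.eq, hB₁h.eq]
    exact isSelfAdjoint_iff.mpr (by rw [← map_star, hstar])
  refine sa_norm_le' (M S) hSsa (by positivity) ?_
  intro ψ hψ
  -- decompose the Kronecker products
  have split : ∀ (A : Matrix (Fin m) (Fin m) ℂ) (B : Matrix (Fin n) (Fin n) ℂ),
      A.IsHermitian →
      (@inner ℂ _ _ (M (A ⊗ₖ B) ψ) ψ)
        = @inner ℂ _ _ (M ((1 : Matrix (Fin m) (Fin m) ℂ) ⊗ₖ B) ψ)
            (M (A ⊗ₖ (1 : Matrix (Fin n) (Fin n) ℂ)) ψ) := by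
    intro A B hA
    have hfact : A ⊗ₖ B
        = (A ⊗ₖ (1 : Matrix (Fin n) (Fin n) ℂ)) * ((1 : Matrix (Fin m) (Fin m) ℂ) ⊗ₖ B) := by
      rw [← Matrix.mul_kronecker_mul, Matrix.mul_one, Matrix.one_mul]
    have hsa := hkerm A (1 : Matrix (Fin n) (Fin n) ℂ) hA h1n
    have hsymm := ContinuousLinearMap.isSelfAdjoint_iff_isSymmetric.mp hsa
    rw [hfact, _root_.map_mul, ContinuousLinearMap.mul_apply]
    exact hsymm.apply_clm _ _
  set a₀ := M (A₀ ⊗ₖ (1 : Matrix (Fin n) (Fin n) ℂ)) ψ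
  set a₁ := M (A₁ ⊗ₖ (1 : Matrix (Fin n) (Fin n) ℂ)) ψ
  set b₀ := M ((1 : Matrix (Fin m) (Fin m) ℂ) ⊗ₖ B₀) ψ
  set b₁ := M ((1 : Matrix (Fin m) (Fin m) ℂ) ⊗ₖ B₁) ψ
  have hdecomp : @inner ℂ _ _ (M S ψ) ψ
      = @inner ℂ _ _ (b₀ + b₁) a₀ + @inner ℂ _ _ (b₀ - b₁) a₁ := by
    rw [hS]
    simp only [map_add, map_sub, ContinuousLinearMap.add_apply, ContinuousLinearMap.sub_apply,
      inner_add_left, inner_sub_left]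
    rw [split A₀ B₀ hA₀h, split A₀ B₁ hA₀h, split A₁ B₀ hA₁h, split A₁ B₁ hA₁h]
    ring
  -- norms of the pieces
  have ha₀ : ‖a₀‖ ≤ 1 := by
    calc ‖a₀‖ ≤ ‖Matrix.toEuclideanCLM (𝕜 := ℂ) A₀‖ * ‖ψ‖ := norm_kron_one_apply_le' A₀ ψ
      _ ≤ 1 * 1 := mul_le_mul hA₀ hψ (norm_nonneg _) (by linarith [norm_nonneg (Matrix.toEuclideanCLM (𝕜 := ℂ) A₀)])
      _ = 1 := one_mul 1
  have ha₁ : ‖a₁‖ ≤ 1 := by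
    calc ‖a₁‖ ≤ ‖Matrix.toEuclideanCLM (𝕜 := ℂ) A₁‖ * ‖ψ‖ := norm_kron_one_apply_le' A₁ ψ
      _ ≤ 1 * 1 := mul_le_mul hA₁ hψ (norm_nonneg _) (by linarith [norm_nonneg (Matrix.toEuclideanCLM (𝕜 := ℂ) A₁)])
      _ = 1 := one_mul 1
  have hb₀ : ‖b₀‖ ≤ 1 := by
    calc ‖b₀‖ ≤ ‖Matrix.toEuclideanCLM (𝕜 := ℂ) B₀‖ * ‖ψ‖ := norm_one_kron_apply_le' B₀ ψ
      _ ≤ 1 * 1 := mul_le_mul hB₀ hψ (norm_nonneg _) (by linarith [norm_nonneg (Matrix.toEuclideanCLM (𝕜 := ℂ) B₀)])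
      _ = 1 := one_mul 1
  have hb₁ : ‖b₁‖ ≤ 1 := by
    calc ‖b₁‖ ≤ ‖Matrix.toEuclideanCLM (𝕜 := ℂ) B₁‖ * ‖ψ‖ := norm_one_kron_apply_le' B₁ ψ
      _ ≤ 1 * 1 := mul_le_mul hB₁ hψ (norm_nonneg _) (by linarith [norm_nonneg (Matrix.toEuclideanCLM (𝕜 := ℂ) B₁)])
      _ = 1 := one_mul 1
  -- the final numeric estimate
  have habs : |(@inner ℂ _ _ (M S ψ) ψ).re|
      ≤ ‖b₀ + b₁‖ * ‖a₀‖ + ‖b₀ - b₁‖ * ‖a₁‖ := by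
    rw [hdecomp, Complex.add_re]
    calc |(@inner ℂ _ _ (b₀ + b₁) a₀).re + (@inner ℂ _ _ (b₀ - b₁) a₁).re|
        ≤ |(@inner ℂ _ _ (b₀ + b₁) a₀).re| + |(@inner ℂ _ _ (b₀ - b₁) a₁).re| := abs_add_le _ _
      _ ≤ ‖b₀ + b₁‖ * ‖a₀‖ + ‖b₀ - b₁‖ * ‖a₁‖ := by
          gcongr
          · exact (Complex.abs_re_le_norm _).trans
              (by exact norm_inner_le_norm _ _)
          · exact (Complex.abs_re_le_norm _).trans
              (by exact norm_inner_le_norm _ _)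
  have par := parallelogram_law_with_norm ℂ b₀ b₁
  have hs2 : Real.sqrt 2 ^ 2 = 2 := Real.sq_sqrt (by norm_num)
  have hs0 : (0:ℝ) < Real.sqrt 2 := Real.sqrt_pos.mpr (by norm_num)
  have hp0 : (0:ℝ) ≤ ‖b₀ + b₁‖ := norm_nonneg _
  have hq0 : (0:ℝ) ≤ ‖b₀ - b₁‖ := norm_nonneg _
  have hb₀0 := norm_nonneg b₀
  have hb₁0 := norm_nonneg b₁
  have hpq : ‖b₀ + b₁‖ + ‖b₀ - b₁‖ ≤ 2 * Real.sqrt 2 := by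
    nlinarith [sq_nonneg (‖b₀ + b₁‖ - ‖b₀ - b₁‖),
      sq_nonneg (‖b₀ + b₁‖ + ‖b₀ - b₁‖ - 2 * Real.sqrt 2)]
  calc |(@inner ℂ _ _ (M S ψ) ψ).re|
      ≤ ‖b₀ + b₁‖ * ‖a₀‖ + ‖b₀ - b₁‖ * ‖a₁‖ := habs
    _ ≤ ‖b₀ + b₁‖ * 1 + ‖b₀ - b₁‖ * 1 := by gcongr
    _ = ‖b₀ + b₁‖ + ‖b₀ - b₁‖ := by ring
    _ ≤ 2 * Real.sqrt 2 := hpq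
end

section
/- Suppose a joint distribution over Booleans factorises as p(c,a,d,b|x,y) = p(c)·p(a|x,c)·p(d|c,x,a)·p(b|c,x,a,d,y) (No Retrocausality factorisation) and additionally satisfies the Screening via Pseudo Events condition p(b|c,x,a,d,y) = p(b|c,x,d,y), together with the mediator-independence p(c,d|x,y) = p(c,d) and the conditional independences p(a|c,d,x,y) = p(a|c,x) and p(b|c,d,x,y) = p(b|c,d,y). Then the observed marginal admits the factorisation p(a,b|x,y) = Σ_{c,d} p(c,d)·p(a|x,c)·p(b|y,c,d). -/
/-- Key factorisation step of the Causal Friendliness theorem: the NRC causal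
    factorisation, SPE, mediator-independence and the two conditional independences
    together give p(a,b|x,y) = Σ_{c,d} p(c,d)·p(a|x,c)·p(b|y,c,d). -/
theorem stmt_15
    -- the joint distribution
    (J : Bool → Bool → Bool → Bool → Bool → Bool → ℝ)  -- J c a d b x y = p(c,a,d,b|x,y)
    -- NRC factorisation kernels
    (pC : Bool → ℝ) (pA : Bool → Bool → Bool → ℝ)      -- p(c), p(a|x,c)
    (pD : Bool → Bool → Bool → Bool → ℝ)               -- p(d|c,x,a)
    (pB : Bool → Bool → Bool → Bool → Bool → Bool → ℝ) -- p(b|c,x,a,d,y)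
    (hpC0 : ∀ c, 0 ≤ pC c) (hpC1 : ∑ c, pC c = 1)
    (hpA0 : ∀ x c a, 0 ≤ pA x c a) (hpA1 : ∀ x c, ∑ a, pA x c a = 1)
    (hpD0 : ∀ c x a d, 0 ≤ pD c x a d) (hpD1 : ∀ c x a, ∑ d, pD c x a d = 1)
    (hpB0 : ∀ c x a d y b, 0 ≤ pB c x a d y b) (hpB1 : ∀ c x a d y, ∑ b, pB c x a d y b = 1)
    -- NRC: the joint factorises causally
    (hNRC : ∀ c a d b x y,
      J c a d b x y = pC c * pA x c a * pD c x a d * pB c x a d y b)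
    -- SPE: p(b|c,x,a,d,y) does not depend on a
    (hSPE : ∀ c x a a' d y b, pB c x a d y b = pB c x a' d y b)
    -- mediator kernels appearing in the conclusion
    (qCD : Bool → Bool → ℝ)                            -- p(c,d)
    (qA : Bool → Bool → Bool → ℝ)                      -- p(a|x,c)
    (qB : Bool → Bool → Bool → Bool → ℝ)               -- p(b|y,c,d)
    (hqCD0 : ∀ c d, 0 ≤ qCD c d) (hqCD1 : ∑ c, ∑ d, qCD c d = 1)
    (hqA0 : ∀ x c a, 0 ≤ qA x c a) (hqA1 : ∀ x c, ∑ a, qA x c a = 1)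
    (hqB0 : ∀ y c d b, 0 ≤ qB y c d b) (hqB1 : ∀ y c d, ∑ b, qB y c d b = 1)
    -- mediator independence: p(c,d|x,y) = p(c,d)
    (hmed : ∀ c d x y, (∑ a, ∑ b, J c a d b x y) = qCD c d)
    -- Lemma 2 conditional independences: p(a|c,d,x,y) = p(a|c,x), p(b|c,d,x,y) = p(b|c,d,y)
    (hcondA : ∀ c a d x y, (∑ b, J c a d b x y) = qCD c d * qA x c a)
    (hcondB : ∀ c d b x y, (∑ a, J c a d b x y) = qCD c d * qB y c d b) :
    -- conclusion: observed marginal factorises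
    ∀ a b x y,
      (∑ c, ∑ d, J c a d b x y) = ∑ c, ∑ d, qCD c d * qA x c a * qB y c d b := by
  intro a b x y
  have key : ∀ c d, J c a d b x y = qCD c d * qA x c a * qB y c d b := by
    intro c d
    -- Step 1: marginalising over b gives pC·pA·pD = qCD·qA, for every a'.
    have h1 : ∀ a', pC c * pA x c a' * pD c x a' d = qCD c d * qA x c a' := by
      intro a'
      have h := hcondA c a' d x y
      have hPB := hpB1 c x a' d y
      rw [Fintype.sum_bool] at h hPB
      rw [hNRC, hNRC] at h
      linear_combination h - (pC c * pA x c a' * pD c x a' d) * hPB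
    -- Step 2: marginalising over a (using SPE) gives qCD·pB = qCD·qB.
    have h2 : qCD c d * pB c x a d y b = qCD c d * qB y c d b := by
      have h := hcondB c d b x y
      have hQA := hqA1 x c
      rw [Fintype.sum_bool] at h hQA
      rw [hNRC, hNRC, hSPE c x true a d y b, hSPE c x false a d y b,
        h1 true, h1 false] at h
      linear_combination h - (qCD c d * pB c x a d y b) * hQA
    -- Combine.
    rw [hNRC, h1 a]
    linear_combination qA x c a * h2
  simp only [key]
end
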